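/- arXiv:2307.10516 — 4 statements merged into one kernel-verified Lean document; each statement's English description precedes it below -/
import Mathlib

section
/- Let n be a prime and a, b integers coprime to n. Then sum_{i=1}^{n-1} ({ia}_n)^2 {ib}_n = n^3 d(a,b,n) + n^2(n-1)(2n-1)/12. -/
open Finset

/-- The two-dimensional Dedekind sum
`d(a,b,n) = (1/n²) ∑_{i=1}^{n-1} ({ia}_n - n/2)({ib}_n - n/2)`. -/
noncomputable def d2 (a b : ℤ) (n : ℕ) : ℝ :=
  (1 / (n : ℝ) ^ 2) * ∑ i ∈ Finset.Ico 1 n,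
    (((((i : ℤ) * a) % (n : ℤ) : ℤ) : ℝ) - (n : ℝ) / 2) *
    (((((i : ℤ) * b) % (n : ℤ) : ℤ) : ℝ) - (n : ℝ) / 2)

/-- residue is in (0, n) -/
lemma res_pos (n : ℕ) (hn : 1 < n) (a : ℤ) (ha : Int.gcd a n = 1) (i : ℕ)
    (hi : i ∈ Finset.Ico 1 n) : 0 < ((i : ℤ) * a) % (n : ℤ) ∧ ((i : ℤ) * a) % (n : ℤ) < n := by
  simp only [Finset.mem_Ico] at hi
  have hn0 : (0 : ℤ) < n := by exact_mod_cast Nat.lt_of_lt_of_le Nat.zero_lt_one hn.le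
  have h1 := Int.emod_nonneg ((i : ℤ) * a) (by positivity)
  have h2 := Int.emod_lt_of_pos ((i : ℤ) * a) hn0
  refine ⟨?_, h2⟩
  rcases h1.lt_or_eq with h | h
  · exact h
  · exfalso
    have hdvd : (n : ℤ) ∣ (i : ℤ) * a := Int.dvd_of_emod_eq_zero h.symm
    have hco : IsCoprime (a : ℤ) (n : ℤ) := Int.isCoprime_iff_gcd_eq_one.mpr ha
    have : (n : ℤ) ∣ (i : ℤ) := (IsCoprime.dvd_of_dvd_mul_right hco.symm) hdvd
    have := Int.le_of_dvd (by exact_mod_cast hi.1) this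
    omega

/-- reflection: ((n-i)*a) % n = n - (i*a % n) -/
lemma res_reflect (n : ℕ) (hn : 1 < n) (a : ℤ) (ha : Int.gcd a n = 1) (i : ℕ)
    (hi : i ∈ Finset.Ico 1 n) :
    (((n - i : ℕ) : ℤ) * a) % (n : ℤ) = (n : ℤ) - ((i : ℤ) * a) % (n : ℤ) := by
  obtain ⟨hpos, hlt⟩ := res_pos n hn a ha i hi
  simp only [Finset.mem_Ico] at hi
  set r := ((i : ℤ) * a) % (n : ℤ) with hr
  have hcast : (((n - i : ℕ) : ℤ)) = (n : ℤ) - (i : ℤ) := by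
    push_cast [Nat.cast_sub hi.2.le]; ring
  have h2 : (n : ℤ) ∣ (i : ℤ) * a - r := Int.dvd_self_sub_of_emod_eq rfl
  obtain ⟨k, hk⟩ := h2
  have hd : (n : ℤ) ∣ ((n : ℤ) - i) * a - ((n : ℤ) - r) :=
    ⟨a - 1 - k, by linear_combination -hk⟩
  rw [hcast]
  calc ((n : ℤ) - i) * a % n = ((n : ℤ) - r) % n := by
        rw [Int.emod_eq_emod_iff_emod_sub_eq_zero]
        exact Int.emod_eq_zero_of_dvd hd
    _ = (n : ℤ) - r := Int.emod_eq_of_lt (by omega) (by omega)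

/-- the map i ↦ (i*a) % n permutes Ico 1 n -/
lemma sum_res_perm (n : ℕ) (hn : 1 < n) (a : ℤ) (ha : Int.gcd a n = 1) (g : ℤ → ℝ) :
    ∑ i ∈ Finset.Ico 1 n, g (((i : ℤ) * a) % (n : ℤ)) = ∑ j ∈ Finset.Ico 1 n, g (j : ℤ) := by
  have hco : IsCoprime (a : ℤ) (n : ℤ) := Int.isCoprime_iff_gcd_eq_one.mpr ha
  obtain ⟨x, y, hxy⟩ := hco
  have hcox : Int.gcd x n = 1 := Int.isCoprime_iff_gcd_eq_one.mp ⟨a, y, by linarith⟩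
  have hn0 : (0 : ℤ) < n := by exact_mod_cast Nat.lt_of_lt_of_le Nat.zero_lt_one hn.le
  have key : ∀ (u v : ℤ), u * v % (n : ℤ) = 1 % n → ∀ i ∈ Finset.Ico 1 n,
      ((((i : ℤ) * u) % n).toNat : ℤ) * v % n = i := by
    intro u v huv i hi
    simp only [Finset.mem_Ico] at hi
    have h1 := Int.emod_nonneg ((i : ℤ) * u) (ne_of_gt hn0)
    rw [Int.toNat_of_nonneg h1]
    have : ((i : ℤ) * u % n) * v % n = ((i : ℤ) * (u * v)) % n := by
      rw [Int.mul_emod, Int.emod_emod_of_dvd _ (dvd_refl _), ← Int.mul_emod]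
      ring_nf
    rw [this, Int.mul_emod, huv, ← Int.mul_emod, mul_one]
    exact Int.emod_eq_of_lt (by exact_mod_cast Nat.zero_le i) (by exact_mod_cast hi.2)
  have hax : a * x % (n : ℤ) = 1 % n := by
    have hdd : (n : ℤ) ∣ a * x - 1 := ⟨-y, by linarith⟩
    rw [Int.emod_eq_emod_iff_emod_sub_eq_zero]
    exact Int.emod_eq_zero_of_dvd hdd
  have hxa : x * a % (n : ℤ) = 1 % n := by rw [mul_comm]; exact hax
  refine Finset.sum_nbij' (fun i => (((i : ℤ) * a) % (n : ℤ)).toNat)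
    (fun j => (((j : ℤ) * x) % (n : ℤ)).toNat) ?_ ?_ ?_ ?_ ?_
  · intro i hi
    obtain ⟨h1, h2⟩ := res_pos n hn a ha i hi
    simp only [Finset.mem_Ico]
    omega
  · intro j hj
    obtain ⟨h1, h2⟩ := res_pos n hn x hcox j hj
    simp only [Finset.mem_Ico]
    omega
  · intro i hi
    have := key a x hax i hi
    omega
  · intro j hj
    have := key x a hxa j hj
    omega
  · intro i hi
    obtain ⟨h1, _⟩ := res_pos n hn a ha i hi
    rw [Int.toNat_of_nonneg h1.le]

lemma sum_Ico_id_real (n : ℕ) : ∑ j ∈ Finset.Ico 1 n, (j : ℝ) = n * (n - 1) / 2 := by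
  induction n with
  | zero => simp
  | succ m ih =>
    rcases Nat.eq_zero_or_pos m with h | h
    · subst h; simp
    · rw [Finset.sum_Ico_succ_top (by omega), ih]
      push_cast
      ring

lemma sum_Ico_sq_real (n : ℕ) : ∑ j ∈ Finset.Ico 1 n, (j : ℝ) ^ 2 = n * (n - 1) * (2 * n - 1) / 6 := by
  induction n with
  | zero => simp
  | succ m ih =>
    rcases Nat.eq_zero_or_pos m with h | h
    · subst h; simp
    · rw [Finset.sum_Ico_succ_top (by omega), ih]
      push_cast
      ring

theorem sum_res_sq_mul (n : ℕ) (hn : n.Prime) (a b : ℤ)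
    (ha : Int.gcd a n = 1) (hb : Int.gcd b n = 1) :
    ∑ i ∈ Finset.Ico 1 n,
        (((((i : ℤ) * a) % (n : ℤ) : ℤ) : ℝ)) ^ 2 * (((((i : ℤ) * b) % (n : ℤ) : ℤ) : ℝ))
      = (n : ℝ) ^ 3 * d2 a b n + (n : ℝ) ^ 2 * ((n : ℝ) - 1) * (2 * (n : ℝ) - 1) / 12 := by
  have hn1 : 1 < n := hn.one_lt
  have hn0 : (n : ℝ) ≠ 0 := by positivity
  set R : ℕ → ℝ := fun i => (((((i : ℤ) * a) % (n : ℤ) : ℤ) : ℝ)) with hR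
  set B : ℕ → ℝ := fun i => (((((i : ℤ) * b) % (n : ℤ) : ℤ) : ℝ)) with hB
  -- known sums
  have hSR : ∑ i ∈ Finset.Ico 1 n, R i = n * ((n : ℝ) - 1) / 2 := by
    have := sum_res_perm n hn1 a ha (fun z => (z : ℝ))
    simp only [hR]
    rw [this]
    push_cast
    exact sum_Ico_id_real n
  have hSB : ∑ i ∈ Finset.Ico 1 n, B i = n * ((n : ℝ) - 1) / 2 := by
    have := sum_res_perm n hn1 b hb (fun z => (z : ℝ))
    simp only [hB]
    rw [this]
    push_cast
    exact sum_Ico_id_real n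
  have hSR2 : ∑ i ∈ Finset.Ico 1 n, (R i) ^ 2 = n * ((n : ℝ) - 1) * (2 * n - 1) / 6 := by
    have := sum_res_perm n hn1 a ha (fun z => (z : ℝ) ^ 2)
    simp only [hR]
    rw [this]
    push_cast
    exact sum_Ico_sq_real n
  -- reflection
  have hrefl : ∑ i ∈ Finset.Ico 1 n, (R i) ^ 2 * B i
      = ∑ i ∈ Finset.Ico 1 n, ((n : ℝ) - R i) ^ 2 * ((n : ℝ) - B i) := by
    refine Finset.sum_nbij' (fun i => n - i) (fun i => n - i) ?_ ?_ ?_ ?_ ?_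
    · intro i hi; simp only [Finset.mem_Ico] at *; omega
    · intro i hi; simp only [Finset.mem_Ico] at *; omega
    · intro i hi; simp only [Finset.mem_Ico] at hi; omega
    · intro i hi; simp only [Finset.mem_Ico] at hi; omega
    · intro i hi
      have hmem : n - i ∈ Finset.Ico 1 n := by
        simp only [Finset.mem_Ico] at *; omega
      have hii : n - (n - i) = i := by simp only [Finset.mem_Ico] at hi; omega
      have hra : R (n - i) = (n : ℝ) - R i := by
        simp only [hR]
        have := res_reflect n hn1 a ha i hi
        rw [this]; push_cast; ring
      have hrb : B (n - i) = (n : ℝ) - B i := by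
        simp only [hB]
        have := res_reflect n hn1 b hb i hi
        rw [this]; push_cast; ring
      have : R i = (n : ℝ) - R (n - i) := by rw [hra]; ring
      have hb' : B i = (n : ℝ) - B (n - i) := by rw [hrb]; ring
      rw [this, hb']
  have hcard : ((Finset.Ico 1 n).card : ℝ) = (n : ℝ) - 1 := by
    rw [Nat.card_Ico]
    push_cast [Nat.cast_sub hn1.le]
    ring
  -- expand reflection sum
  have hexp : ∑ i ∈ Finset.Ico 1 n, ((n : ℝ) - R i) ^ 2 * ((n : ℝ) - B i)
      = ((n : ℝ) - 1) * (n : ℝ) ^ 3 - (n : ℝ) ^ 2 * (∑ i ∈ Finset.Ico 1 n, B i)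
        - 2 * (n : ℝ) ^ 2 * (∑ i ∈ Finset.Ico 1 n, R i)
        + 2 * (n : ℝ) * (∑ i ∈ Finset.Ico 1 n, R i * B i)
        + (n : ℝ) * (∑ i ∈ Finset.Ico 1 n, (R i) ^ 2)
        - ∑ i ∈ Finset.Ico 1 n, (R i) ^ 2 * B i := by
    have : ∀ i ∈ Finset.Ico 1 n, ((n : ℝ) - R i) ^ 2 * ((n : ℝ) - B i)
        = (n : ℝ) ^ 3 - (n : ℝ) ^ 2 * B i - 2 * (n : ℝ) ^ 2 * R i
          + 2 * (n : ℝ) * (R i * B i) + (n : ℝ) * (R i) ^ 2 - (R i) ^ 2 * B i := by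
      intro i _; ring
    rw [Finset.sum_congr rfl this]
    simp only [Finset.sum_sub_distrib, Finset.sum_add_distrib, Finset.sum_const,
      ← Finset.mul_sum, nsmul_eq_mul, hcard]
  -- expand d2
  have hd3 : (n : ℝ) ^ 3 * d2 a b n
      = (n : ℝ) * (∑ i ∈ Finset.Ico 1 n, R i * B i)
        - (n : ℝ) ^ 2 / 2 * (∑ i ∈ Finset.Ico 1 n, R i)
        - (n : ℝ) ^ 2 / 2 * (∑ i ∈ Finset.Ico 1 n, B i)
        + ((n : ℝ) - 1) * (n : ℝ) ^ 3 / 4 := by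
    rw [d2]
    have : ∀ i ∈ Finset.Ico 1 n,
        (R i - (n : ℝ) / 2) * (B i - (n : ℝ) / 2)
        = R i * B i - (n : ℝ) / 2 * R i - (n : ℝ) / 2 * B i + (n : ℝ) ^ 2 / 4 := by
      intro i _; ring
    rw [Finset.sum_congr rfl this]
    simp only [Finset.sum_sub_distrib, Finset.sum_add_distrib, Finset.sum_const,
      ← Finset.mul_sum, nsmul_eq_mul, hcard]
    field_simp
  rw [hd3]
  linear_combination (1 / 2 : ℝ) * hrefl + (1 / 2 : ℝ) * hexp
    + (-(n : ℝ) ^ 2 / 2) * hSR + ((n : ℝ) / 2) * hSR2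
end

section
/- Let n > q > 0 be coprime, n/q = [k_1,...,k_s] the Hirzebruch-Jung continued fraction, and N_alpha = (m_alpha + n_alpha - n)/n with m, n the Hirzebruch-Jung sequences. Then sum_{alpha=1}^{s} N_alpha (k_alpha - 2) = -(N_1 + N'_1) - sum_{alpha=1}^{s}(k_alpha - 2), where N_1 = (q + 1 - n)/n and N'_1 = (q' + 1 - n)/n with q' the inverse of q modulo n in (0,n). -/
open Finset

/-- Telescoping identity:
`∑_{α=1}^s N_α (k_α - 2) = -(N_1 + N'_1) - ∑_{α=1}^s (k_α - 2)`,
where `N_1 = (q+1-n)/n` and `N'_1 = (q'+1-n)/n`. -/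
theorem HJ_N_telescope (n q q' s : ℕ) (hq : 0 < q) (hqn : q < n)
    (hq' : 0 < q') (hq'n : q' < n) (hinv : (q * q') % n = 1 % n)
    (hco : Nat.Coprime n q)
    (m nn k : ℕ → ℤ)
    (hm0 : m 0 = (n : ℤ)) (hm1 : m 1 = (q : ℤ))
    (hn0 : nn 0 = 0) (hn1 : nn 1 = 1)
    (hk : ∀ α, 1 ≤ α → α ≤ s → 2 ≤ k α)
    (hrecm : ∀ α, 1 ≤ α → α ≤ s → m (α + 1) = k α * m α - m (α - 1))
    (hrecn : ∀ α, 1 ≤ α → α ≤ s → nn (α + 1) = k α * nn α - nn (α - 1))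
    (hms : m s = 1) (hmlast : m (s + 1) = 0)
    (hns : nn s = (q' : ℤ)) (hnlast : nn (s + 1) = (n : ℤ))
    (N : ℕ → ℝ) (hN : ∀ α, N α = ((m α : ℝ) + (nn α : ℝ) - n) / n) :
    ∑ α ∈ Finset.Icc 1 s, N α * ((k α : ℝ) - 2)
      = -((((q : ℝ) + 1 - n) / n) + (((q' : ℝ) + 1 - n) / n))
          - ∑ α ∈ Finset.Icc 1 s, ((k α : ℝ) - 2) := by
  have hnpos : (0:ℝ) < n := by exact_mod_cast hq.trans hqn
  have hnne : (n:ℝ) ≠ 0 := ne_of_gt hnpos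
  set g : ℕ → ℝ := fun α => N (α + 1) - N α with hg
  have hterm : ∀ α ∈ Finset.Icc 1 s,
      N α * ((k α : ℝ) - 2) + ((k α : ℝ) - 2) = g α - g (α - 1) := by
    intro α hα
    rw [Finset.mem_Icc] at hα
    obtain ⟨h1, h2⟩ := hα
    obtain ⟨β, rfl⟩ : ∃ β, α = β + 1 := ⟨α - 1, by omega⟩
    have e1 := hrecm (β + 1) h1 h2
    have e2 := hrecn (β + 1) h1 h2
    simp only [Nat.add_sub_cancel] at e1 e2 ⊢
    simp only [hg]
    rw [hN (β + 1 + 1), hN (β + 1), hN β, e1, e2]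
    push_cast
    field_simp
    ring
  have hsum : ∑ α ∈ Finset.Icc 1 s, (N α * ((k α : ℝ) - 2) + ((k α : ℝ) - 2))
      = g s - g 0 := by
    rw [Finset.sum_congr rfl hterm, ← Finset.Ico_add_one_right_eq_Icc, Finset.sum_Ico_eq_sum_range]
    simp only [Nat.add_sub_cancel, Nat.succ_sub_one]
    have h : ∀ i, g (1 + i) - g (1 + i - 1) = g (i + 1) - g i := by
      intro i; rw [Nat.add_comm 1 i, Nat.add_sub_cancel]
    simp only [h]
    exact Finset.sum_range_sub g s
  have hN0 : N 0 = 0 := by rw [hN, hm0, hn0]; push_cast; field_simp; ring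
  have hNs1 : N (s + 1) = 0 := by rw [hN, hmlast, hnlast]; push_cast; field_simp; ring
  have hN1 : N 1 = ((q : ℝ) + 1 - n) / n := by rw [hN, hm1, hn1]; push_cast; ring
  have hNs : N s = ((q' : ℝ) + 1 - n) / n := by rw [hN, hms, hns]; push_cast; ring
  have hend : g s - g 0 = -((((q : ℝ) + 1 - n) / n) + (((q' : ℝ) + 1 - n) / n)) := by
    simp only [hg]
    rw [hNs1, hN0, hN1, hNs]; ring
  rw [Finset.sum_add_distrib, hend] at hsum
  linarith [hsum]
end

section
/- Let n > q > 0 be coprime integers with Hirzebruch-Jung sequences (m_alpha, n_alpha)_{alpha=0}^{s+1} for n/q, and let q' be the inverse of q modulo n. If (m'_alpha, n'_alpha)_{alpha=0}^{s+1} are the Hirzebruch-Jung sequences for n/q', then (m'_alpha, n'_alpha) = (n_{s+1-alpha}, m_{s+1-alpha}) for all 0 <= alpha <= s+1. -/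
lemma HJ_key (a b c c' x x' : ℤ) (h : x = c * b - a) (h' : x' = c' * b - a)
    (hx : 0 ≤ x) (hx' : 0 ≤ x') (hxb : x < b) (hx'b : x' < b) :
    c = c' ∧ x = x' := by
  have hb : 0 < b := lt_of_le_of_lt hx hxb
  have hd : (c - c') * b = x - x' := by rw [h, h']; ring
  have hcc : c = c' := by
    rcases lt_trichotomy c c' with hlt | heq | hgt
    · nlinarith [mul_le_mul_of_nonneg_right (by omega : c - c' ≤ -1) hb.le]
    · exact heq
    · nlinarith [mul_le_mul_of_nonneg_right (by omega : 1 ≤ c - c') hb.le]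
  refine ⟨hcc, ?_⟩
  rw [hcc] at hd
  linarith [hd]

/-- Duality of Hirzebruch-Jung sequences: the sequences for `n/q'` are the
reversed swapped sequences for `n/q`. -/
theorem HJ_duality (n q q' s : ℕ) (hq : 0 < q) (hqn : q < n)
    (hq' : 0 < q') (hq'n : q' < n) (hinv : (q * q') % n = 1 % n)
    (hco : Nat.Coprime n q)
    (m nn k : ℕ → ℤ)
    (hm0 : m 0 = (n : ℤ)) (hm1 : m 1 = (q : ℤ))
    (hn0 : nn 0 = 0) (hn1 : nn 1 = 1)
    (hk : ∀ α, 1 ≤ α → α ≤ s → 2 ≤ k α)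
    (hrecm : ∀ α, 1 ≤ α → α ≤ s → m (α + 1) = k α * m α - m (α - 1))
    (hrecn : ∀ α, 1 ≤ α → α ≤ s → nn (α + 1) = k α * nn α - nn (α - 1))
    (hdec : ∀ α, 1 ≤ α → α ≤ s → 0 ≤ m (α + 1) ∧ m (α + 1) < m α)
    (hms : m s = 1) (hmlast : m (s + 1) = 0)
    (hns : nn s = (q' : ℤ)) (hnlast : nn (s + 1) = (n : ℤ))
    (m' nn' k' : ℕ → ℤ)
    (hm0' : m' 0 = (n : ℤ)) (hm1' : m' 1 = (q' : ℤ))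
    (hn0' : nn' 0 = 0) (hn1' : nn' 1 = 1)
    (hk' : ∀ α, 1 ≤ α → α ≤ s → 2 ≤ k' α)
    (hrecm' : ∀ α, 1 ≤ α → α ≤ s → m' (α + 1) = k' α * m' α - m' (α - 1))
    (hrecn' : ∀ α, 1 ≤ α → α ≤ s → nn' (α + 1) = k' α * nn' α - nn' (α - 1))
    (hdec' : ∀ α, 1 ≤ α → α ≤ s → 0 ≤ m' (α + 1) ∧ m' (α + 1) < m' α)
    (hms' : m' s = 1) (hmlast' : m' (s + 1) = 0)
    (hnlast' : nn' (s + 1) = (n : ℤ)) :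
    ∀ α ≤ s + 1, m' α = nn (s + 1 - α) ∧ nn' α = m (s + 1 - α) := by
  -- s ≥ 1
  have hs1 : 1 ≤ s := by
    by_contra h
    have hs0 : s = 0 := by omega
    rw [hs0] at hms
    rw [hm0] at hms
    omega
  -- nn is nonneg and strictly increasing
  have haux : ∀ α, α ≤ s → 0 ≤ nn α ∧ nn α < nn (α + 1) := by
    intro α
    induction α with
    | zero => intro _; rw [hn0, hn1]; norm_num
    | succ β ih =>
      intro hβ
      have h1 : β ≤ s := by omega
      obtain ⟨h0, hlt⟩ := ih h1
      have hrec := hrecn (β + 1) (by omega) hβ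
      have hkk := hk (β + 1) (by omega) hβ
      simp only [Nat.add_sub_cancel] at hrec
      constructor
      · linarith
      · have hpos : 0 < nn (β + 1) := by linarith
        nlinarith
  intro α hα
  induction α using Nat.strong_induction_on with
  | _ α ih =>
    match α, hα with
    | 0, _ =>
      simp only [Nat.sub_zero]
      exact ⟨by rw [hm0', hnlast], by rw [hn0', hmlast]⟩
    | 1, _ =>
      have : s + 1 - 1 = s := by omega
      rw [this]
      exact ⟨by rw [hm1', hns], by rw [hn1', hms]⟩
    | (β + 2), hβ2 =>
      -- set α₀ = β + 1, so 1 ≤ α₀ ≤ s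
      have hα₀1 : 1 ≤ β + 1 := by omega
      have hα₀s : β + 1 ≤ s := by omega
      obtain ⟨ihm1, ihn1⟩ := ih (β + 1) (by omega) (by omega)
      obtain ⟨ihm0, ihn0⟩ := ih β (by omega) (by omega)
      -- γ = s + 1 - (β + 1), with 1 ≤ γ ≤ s
      set γ := s + 1 - (β + 1) with hγdef
      have hγ1 : 1 ≤ γ := by omega
      have hγs : γ ≤ s := by omega
      have e1 : s + 1 - (β + 2) = γ - 1 := by omega
      have e2 : s + 1 - β = γ + 1 := by omega
      rw [e2] at ihm0 ihn0
      -- recursion for m'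
      have hrm' := hrecm' (β + 1) hα₀1 hα₀s
      simp only [Nat.add_sub_cancel] at hrm'
      rw [ihm1, ihm0] at hrm'
      -- recursion for nn at γ, rearranged
      have hrn := hrecn γ hγ1 hγs
      have hrn' : nn (γ - 1) = k γ * nn γ - nn (γ + 1) := by
        have hγγ : γ - 1 + 1 = γ := by omega
        rw [← hγγ] at hrn
        simp only [Nat.add_sub_cancel] at hrn
        rw [hγγ] at hrn
        linarith
      -- bounds
      obtain ⟨hd0, hd1⟩ := hdec' (β + 1) hα₀1 hα₀s
      rw [ihm1] at hd1
      have haux1 := haux (γ - 1) (by omega)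
      have hγγ : γ - 1 + 1 = γ := by omega
      rw [hγγ] at haux1
      obtain ⟨ha0, ha1⟩ := haux1
      -- apply uniqueness
      obtain ⟨hkeq, hxeq⟩ := HJ_key (nn (γ + 1)) (nn γ) (k' (β + 1)) (k γ)
        (m' (β + 2)) (nn (γ - 1)) hrm' hrn' hd0 ha0 hd1 ha1
      refine ⟨by rw [e1]; exact hxeq, ?_⟩
      -- second component
      have hrn2 := hrecn' (β + 1) hα₀1 hα₀s
      simp only [Nat.add_sub_cancel] at hrn2
      rw [ihn1, ihn0, hkeq] at hrn2
      have hrm := hrecm γ hγ1 hγs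
      have hrm2 : m (γ - 1) = k γ * m γ - m (γ + 1) := by
        rw [← hγγ] at hrm
        simp only [Nat.add_sub_cancel] at hrm
        rw [hγγ] at hrm
        linarith
      rw [e1, hrn2, hrm2]
end

section
/- Let n be prime, 0 <= nu_1,...,nu_d < n, and for a fixed index k with nu_k != 0 let 0 <= q_j < n satisfy nu_j + q_j nu_k ≡ 0 (mod n) for all j != k (so q_k = n-1 formally). Let sigma be the simplicial cone in R^d generated by n e_j - q_j e_k (for j != k) and e_k. Then every lattice point v in the fundamental parallelepiped of sigma can be written as v = (1/n)(sum_{j != k} v_j (n e_j - q_j e_k) + {sum_{j != k} v_j q_j}_n e_k) with integers 0 <= v_j < n; in particular the k-th coordinate of n*v in terms of the generators is {sum_{j != k} v_j q_j}_n. -/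
open Finset

/-- Every lattice point of the fundamental parallelepiped of the simplicial cone
`σ = C(n e_j - q_j e_k (j ≠ k), e_k)` decomposes as
`v = (1/n)(∑_{j≠k} v_j (n e_j - q_j e_k) + {∑_{j≠k} v_j q_j}_n e_k)`
with integers `0 ≤ v_j < n`. -/
theorem parallelepiped_decomposition (d : ℕ) (n : ℕ) (hn : n.Prime)
    (k : Fin d) (ν q : Fin d → ℤ)
    (hν : ∀ j, 0 ≤ ν j ∧ ν j < n) (hνk : ν k ≠ 0)
    (hq : ∀ j, 0 ≤ q j ∧ q j < n)
    (hcong : ∀ j, j ≠ k → (n : ℤ) ∣ ν j + q j * ν k)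
    -- the generators of the cone σ: `g j = n e_j - q_j e_k` for `j ≠ k`, `g k = e_k`
    (g : Fin d → (Fin d → ℝ))
    (hg : ∀ j, j ≠ k → g j = fun i =>
      (n : ℝ) * (if i = j then 1 else 0) - (q j : ℝ) * (if i = k then 1 else 0))
    (hgk : g k = fun i => if i = k then 1 else 0)
    -- `v` is a lattice point of the fundamental parallelepiped of σ
    (v : Fin d → ℤ)
    (hv : ∃ c : Fin d → ℝ, (∀ j, 0 ≤ c j ∧ c j < 1) ∧
      ∀ i, (v i : ℝ) = ∑ j : Fin d, c j * g j i) :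
    ∃ w : Fin d → ℤ, (∀ j, 0 ≤ w j ∧ w j < n) ∧ ∀ i,
      ((n : ℤ) * v i : ℝ)
        = (∑ j ∈ Finset.univ.erase k, (w j : ℝ) * g j i)
          + (((∑ j ∈ Finset.univ.erase k, w j * q j) % (n : ℤ) : ℤ) : ℝ)
              * (if i = k then 1 else 0) := by
  obtain ⟨c, hc, hsum⟩ := hv
  have hnpos : (0 : ℤ) < n := by exact_mod_cast hn.pos
  have hnR : (0 : ℝ) < n := by exact_mod_cast hn.pos
  have hci : ∀ i, i ≠ k → (v i : ℝ) = c i * n := by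
    intro i hik
    rw [hsum i, Finset.sum_eq_single i]
    · rw [hg i hik]; simp [hik]
    · intro j _ hji
      by_cases hjk : j = k
      · subst hjk; rw [hgk]; simp [hik]
      · rw [hg j hjk]; simp [Ne.symm hji, hik]
    · simp
  have hvb : ∀ i, i ≠ k → 0 ≤ v i ∧ v i < n := by
    intro i hik
    have h := hci i hik
    constructor
    · have h0 : (0 : ℝ) ≤ (v i : ℝ) := by rw [h]; exact mul_nonneg (hc i).1 hnR.le
      exact_mod_cast h0
    · have h1 : (v i : ℝ) < n := by
        rw [h]
        calc c i * n < 1 * n := mul_lt_mul_of_pos_right (hc i).2 hnR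
          _ = n := one_mul _
      exact_mod_cast h1
  refine ⟨fun j => if j = k then 0 else v j, ?_, ?_⟩
  · intro j
    by_cases hjk : j = k
    · simp [hjk, hnpos, hn.pos]
    · simpa [hjk] using hvb j hjk
  · intro i
    set S : ℤ := ∑ j ∈ Finset.univ.erase k, (if j = k then 0 else v j) * q j with hS
    have hSv : S = ∑ j ∈ Finset.univ.erase k, v j * q j := by
      refine Finset.sum_congr rfl ?_
      intro j hj
      rw [Finset.mem_erase] at hj
      simp [hj.1]
    have hk : (v k : ℝ) = c k - (∑ j ∈ Finset.univ.erase k, c j * (q j : ℝ)) := by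
      rw [hsum k, ← Finset.add_sum_erase _ _ (Finset.mem_univ k), hgk]
      have hterm : ∀ j ∈ Finset.univ.erase k, c j * g j k = -(c j * (q j : ℝ)) := by
        intro j hj
        rw [Finset.mem_erase] at hj
        rw [hg j hj.1]
        simp [Ne.symm hj.1]
      rw [Finset.sum_congr rfl hterm, Finset.sum_neg_distrib]
      simp [sub_eq_add_neg]
    have hsum2 : (∑ j ∈ Finset.univ.erase k, c j * (q j : ℝ)) * n = (S : ℝ) := by
      rw [hSv]
      push_cast
      rw [Finset.sum_mul]
      refine Finset.sum_congr rfl ?_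
      intro j hj
      rw [Finset.mem_erase] at hj
      rw [hci j hj.1]; ring
    have hck : (n : ℝ) * c k = n * (v k : ℝ) + (S : ℝ) := by
      have h1 : (v k : ℝ) * n = c k * n - (∑ j ∈ Finset.univ.erase k, c j * (q j : ℝ)) * n := by
        rw [hk]; ring
      rw [hsum2] at h1
      linarith
    have hrange : 0 ≤ n * v k + S ∧ n * v k + S < n := by
      have h0 : (0 : ℝ) ≤ n * (v k : ℝ) + (S : ℝ) := by
        rw [← hck]; exact mul_nonneg hnR.le (hc k).1
      have h1 : n * (v k : ℝ) + (S : ℝ) < n := by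
        rw [← hck]
        calc (n : ℝ) * c k < n * 1 := by
              exact mul_lt_mul_of_pos_left (hc k).2 hnR
          _ = n := mul_one _
      constructor
      · exact_mod_cast h0
      · exact_mod_cast h1
    have hmod : S % n = n * v k + S := by
      calc S % n = (S + n * v k) % n := (Int.add_mul_emod_self_left S (n:ℤ) (v k)).symm
        _ = n * v k + S := by rw [add_comm]; exact Int.emod_eq_of_lt hrange.1 hrange.2
    by_cases hik : i = k
    · subst hik
      have hterm : ∀ j ∈ Finset.univ.erase i,
          ((if j = i then (0:ℤ) else v j : ℤ) : ℝ) * g j i = -(((v j * q j : ℤ) : ℝ)) := by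
        intro j hj
        rw [Finset.mem_erase] at hj
        rw [hg j hj.1, if_neg hj.1]
        push_cast
        simp [Ne.symm hj.1]
      have hsum3 : (∑ j ∈ Finset.univ.erase i,
          ((if j = i then (0:ℤ) else v j : ℤ) : ℝ) * g j i) = -(S : ℝ) := by
        rw [Finset.sum_congr rfl hterm, Finset.sum_neg_distrib, hSv]
        push_cast
        ring
      rw [hsum3, hmod, if_pos rfl]
      push_cast
      ring
    · rw [Finset.sum_eq_single i]
      · rw [hg i hik, if_neg hik]
        simp only [if_pos rfl, if_neg hik, mul_one, mul_zero, sub_zero, add_zero]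
        push_cast
        ring
      · intro j hj hji
        rw [Finset.mem_erase] at hj
        rw [hg j hj.1]
        simp [Ne.symm hji, hik]
      · intro h
        exact absurd (Finset.mem_erase.mpr ⟨hik, Finset.mem_univ i⟩) h
end
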